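/- arXiv:1903.09002 — 2 statements merged into one kernel-verified Lean document; each statement's English description precedes it below -/
import Mathlib

section
/- Let a, b be selfadjoint n×n complex matrices. The function t ↦ dim ker(b - t·a) on ℝ attains its minimum value outside a finite subset of ℝ; i.e., there is a finite set F ⊂ ℝ such that dim ker(b - t·a) = min_{s∈ℝ} dim ker(b - s·a) for all t ∉ F. -/
/-!
If `s₀` maximizes `r = rank (b - s₀ • a)`, some `r × r` minor of `b - s₀ • a` is nonzero. The same
minor of `b - t • a` is a polynomial in `t`, nonzero at `s₀`, so it vanishes only at finitely many
`t`; away from them `rank (b - t • a) ≥ r`, i.e. the rank is maximal and the kernel dimension is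
minimal.
-/

open Matrix Module Polynomial Submodule

theorem exists_linearIndependent_comp_fin {K V ι : Type*} [DivisionRing K] [AddCommGroup V]
    [Module K V] [Finite ι] (v : ι → V) {r : ℕ} (hr : r ≤ finrank K (span K (Set.range v))) :
    ∃ g : Fin r → ι, LinearIndependent K (v ∘ g) := by
  obtain ⟨κ, a, ha, hspan, hli⟩ := exists_linearIndependent' K v
  have : Finite κ := Finite.of_injective a ha
  have : Fintype κ := Fintype.ofFinite κ
  rw [← hspan, finrank_span_eq_card hli] at hr
  refine ⟨a ∘ (Fintype.equivFin κ).symm ∘ Fin.castLE hr, ?_⟩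
  exact hli.comp _ ((Fintype.equivFin κ).symm.injective.comp (Fin.castLE_injective hr))

namespace Matrix

theorem det_submatrix_sub_smul_eq_eval {R l m n : Type*} [CommRing R] [Fintype l]
    [DecidableEq l] (a b : Matrix m n R) (f : l → m) (g : l → n) (t : R) :
    ((b - t • a).submatrix f g).det =
      eval t ((b.map C - (X : R[X]) • a.map C).submatrix f g).det := by
  rw [← coe_evalRingHom, RingHom.map_det]
  congr 1
  ext i j
  simp only [submatrix_apply, sub_apply, smul_apply, smul_eq_mul, RingHom.mapMatrix_apply,
    map_apply, coe_evalRingHom, eval_sub, eval_C, eval_mul, eval_X]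

variable {K m n : Type*} [Field K] [Fintype n]

theorem exists_det_submatrix_ne_zero [Fintype m] (M : Matrix m n K) :
    ∃ (f : Fin M.rank → m) (g : Fin M.rank → n), (M.submatrix f g).det ≠ 0 := by
  obtain ⟨g, hg⟩ := exists_linearIndependent_comp_fin M.col M.rank_eq_finrank_span_cols.le
  set N := M.submatrix id g
  have hN : N.rank = M.rank := by
    rw [← rank_transpose]
    exact (LinearIndependent.rank_matrix (M := Nᵀ) hg).trans (Fintype.card_fin _)
  obtain ⟨f, hf⟩ := exists_linearIndependent_comp_fin N.row (hN ▸ N.rank_eq_finrank_span_row).le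
  have hunit : IsUnit (M.submatrix f g) := linearIndependent_rows_iff_isUnit.mp hf
  exact ⟨f, g, ((isUnit_iff_isUnit_det _).mp hunit).ne_zero⟩

theorem le_rank_of_det_submatrix_ne_zero {M : Matrix m n K} {r : ℕ} {f : Fin r → m}
    {g : Fin r → n} (h : (M.submatrix f g).det ≠ 0) : r ≤ M.rank := by
  simpa using (rank_of_det_ne_zero h).symm.trans_le (M.rank_submatrix_le f g)

theorem rank_add_finrank_ker_toLin' [DecidableEq n] (M : Matrix m n K) :
    M.rank + finrank K (LinearMap.ker M.toLin') = Fintype.card n := by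
  rw [toLin'_apply', rank, LinearMap.finrank_range_add_finrank_ker, finrank_fintype_fun_eq_card]

theorem exists_finset_forall_rank_sub_smul_le [Fintype m] (a b : Matrix m n K) :
    ∃ F : Finset K, ∀ t ∉ F, ∀ s : K, (b - s • a).rank ≤ (b - t • a).rank := by
  classical
  have hbdd : BddAbove (Set.range fun s : K => (b - s • a).rank) :=
    ⟨Fintype.card n, by rintro _ ⟨s, rfl⟩; exact rank_le_card_width _⟩
  obtain ⟨s₀, hs₀⟩ := Nat.sSup_mem (Set.range_nonempty _) hbdd
  obtain ⟨f, g, hdet⟩ := (b - s₀ • a).exists_det_submatrix_ne_zero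
  set p := ((b.map C - (X : K[X]) • a.map C).submatrix f g).det
  have heval (t : K) : ((b - t • a).submatrix f g).det = p.eval t :=
    det_submatrix_sub_smul_eq_eval a b f g t
  have hp : p ≠ 0 := fun h => hdet <| by rw [heval, h, eval_zero]
  refine ⟨p.roots.toFinset, fun t ht s => ?_⟩
  have hpt : ((b - t • a).submatrix f g).det ≠ 0 := by
    rw [heval]
    exact fun h => ht (Multiset.mem_toFinset.mpr ((mem_roots hp).mpr h))
  calc (b - s • a).rank ≤ (b - s₀ • a).rank := (le_csSup hbdd ⟨s, rfl⟩).trans_eq hs₀.symm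
    _ ≤ (b - t • a).rank := le_rank_of_det_submatrix_ne_zero hpt

end Matrix

theorem stmt_12_general (n : ℕ) (a b : Matrix (Fin n) (Fin n) ℂ) :
    ∃ F : Finset ℝ, ∀ t : ℝ, t ∉ F →
      Module.finrank ℂ (LinearMap.ker (Matrix.toLin' (b - (t : ℂ) • a))) =
        ⨅ s : ℝ, Module.finrank ℂ (LinearMap.ker (Matrix.toLin' (b - (s : ℂ) • a))) := by
  obtain ⟨F, hF⟩ := exists_finset_forall_rank_sub_smul_le a b
  refine ⟨F.preimage _ Complex.ofReal_injective.injOn, fun t ht => ?_⟩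
  have hmin (s : ℝ) : finrank ℂ (LinearMap.ker (b - (t : ℂ) • a).toLin') ≤
      finrank ℂ (LinearMap.ker (b - (s : ℂ) • a).toLin') := by
    have hrank := hF t (by simpa using ht) s
    have hnullity_t := (b - (t : ℂ) • a).rank_add_finrank_ker_toLin'
    have hnullity_s := (b - (s : ℂ) • a).rank_add_finrank_ker_toLin'
    omega
  exact le_antisymm (le_ciInf hmin) (ciInf_le (OrderBot.bddBelow _) t)

/-- For selfadjoint `a, b ∈ Mₙ(ℂ)`, the function `t ↦ dim ker(b - t·a)` attains its
minimum value outside a finite subset of `ℝ`. -/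
theorem stmt_12 (n : ℕ) (a b : Matrix (Fin n) (Fin n) ℂ)
    (ha : a.IsHermitian) (hb : b.IsHermitian) :
    ∃ F : Finset ℝ, ∀ t : ℝ, t ∉ F →
      Module.finrank ℂ (LinearMap.ker (Matrix.toLin' (b - (t : ℂ) • a))) =
        ⨅ s : ℝ, Module.finrank ℂ (LinearMap.ker (Matrix.toLin' (b - (s : ℂ) • a))) :=
  stmt_12_general n a b
end

section
/- Let A be a von Neumann algebra with faithful normal trace τ and X ∈ Mₙ(A) selfadjoint, with E : Mₙ(A) → Mₙ(ℂ)⊗1 the trace-preserving conditional expectation E([a_{ij}]) = [τ(a_{ij})]. Let q₁ = 1 - ker(E(p)) where p = ker(X). Then ker(X·q₁) = p + (1 - q₁); consequently E(ker(Xq₁)) = E(p) + (1 - q₁) is invertible, and n·τₙ(ker(Xq₁)) - n·τₙ(p) equals the rank of 1 - q₁ viewed in Mₙ(ℂ), an integer. -/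
/-- `p` is the kernel projection of `T`: the largest projection with `T p = 0`. -/
def IsKernelProjection {R : Type*} [Ring R] [StarRing R] (T p : R) : Prop :=
  IsIdempotentElem p ∧ IsSelfAdjoint p ∧ T * p = 0 ∧
    ∀ r : R, IsIdempotentElem r → IsSelfAdjoint r → T * r = 0 → p * r = r

set_option maxHeartbeats 1000000
set_option synthInstance.maxHeartbeats 400000
set_option linter.unusedSectionVars false

noncomputable section
namespace S17

open ContinuousLinearMap

variable {H : Type*} [NormedAddCommGroup H] [InnerProductSpace ℂ H] [CompleteSpace H] {n : ℕ}

local notation "A" => H →L[ℂ] H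

/-- `star a * a = 0` implies `a = 0`. -/
lemma star_mul_self_eq_zero {a : A} (h : star a * a = 0) : a = 0 := by
  ext x
  have h1 : (inner ℂ (a x) (a x) : ℂ) = 0 := by
    have h2 : (inner ℂ ((star a * a) x) x : ℂ) = inner ℂ (a x) (a x) := by
      rw [ContinuousLinearMap.star_eq_adjoint, ContinuousLinearMap.mul_apply]
      exact ContinuousLinearMap.adjoint_inner_left a x (a x)
    rw [h] at h2
    simpa using h2.symm
  simpa using inner_self_eq_zero.mp h1

lemma isPositive_star_mul_self (a : A) : (star a * a).IsPositive := by
  constructor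
  · exact ContinuousLinearMap.isSelfAdjoint_iff_isSymmetric.mp (by rw [IsSelfAdjoint, star_mul, star_star])
  · intro x
    have : (star a * a).reApplyInnerSelf x = RCLike.re (inner ℂ (a x) (a x) : ℂ) := by
      rw [ContinuousLinearMap.reApplyInnerSelf, ContinuousLinearMap.star_eq_adjoint,
        ContinuousLinearMap.mul_apply]
      congr 1
      exact ContinuousLinearMap.adjoint_inner_left a x (a x)
    rw [this]
    exact inner_self_nonneg

abbrev K (n : ℕ) (H : Type*) [NormedAddCommGroup H] [InnerProductSpace ℂ H] :=
  PiLp 2 (fun _ : Fin n => H)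

noncomputable instance : CompleteSpace (K n H) := inferInstance

def proj' (i : Fin n) : K n H →L[ℂ] H :=
  (ContinuousLinearMap.proj i).comp
    (PiLp.continuousLinearEquiv 2 ℂ (fun _ : Fin n => H)).toContinuousLinearMap

def incl (j : Fin n) : H →L[ℂ] K n H :=
  ((PiLp.continuousLinearEquiv 2 ℂ (fun _ : Fin n => H)).symm.toContinuousLinearMap).comp
    (ContinuousLinearMap.pi fun k => if k = j then ContinuousLinearMap.id ℂ H else 0)

lemma proj'_apply (i : Fin n) (v : K n H) : proj' i v = v i := rfl

lemma incl_apply (j : Fin n) (x : H) (k : Fin n) :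
    incl j x k = if k = j then x else 0 := by
  show (if k = j then ContinuousLinearMap.id ℂ H else 0) x = _
  split <;> simp

def Phi (M : Matrix (Fin n) (Fin n) A) : K n H →L[ℂ] K n H :=
  ((PiLp.continuousLinearEquiv 2 ℂ (fun _ : Fin n => H)).symm.toContinuousLinearMap).comp
    (ContinuousLinearMap.pi fun i => ∑ j, (M i j).comp (proj' j))

lemma Phi_apply (M : Matrix (Fin n) (Fin n) A) (v : K n H) (i : Fin n) :
    Phi M v i = ∑ j, M i j (v j) := by
  show (∑ j, (M i j).comp (proj' j)) v = _
  simp [ContinuousLinearMap.sum_apply, proj'_apply]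

lemma Phi_incl (M : Matrix (Fin n) (Fin n) A) (j : Fin n) (x : H) (i : Fin n) :
    Phi M (incl j x) i = M i j x := by
  rw [Phi_apply]
  simp [incl_apply, apply_ite, Finset.sum_ite_eq']

lemma Phi_inj {M N : Matrix (Fin n) (Fin n) A} (h : Phi M = Phi N) : M = N := by
  ext i j x
  have := congrArg (fun T : K n H →L[ℂ] K n H => T (incl j x) i) h
  simpa [Phi_incl] using this

lemma Phi_mul (M N : Matrix (Fin n) (Fin n) A) : Phi (M * N) = (Phi M).comp (Phi N) := by
  apply ContinuousLinearMap.ext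
  intro v
  refine PiLp.ext fun i => ?_
  show Phi (M * N) v i = Phi M (Phi N v) i
  rw [Phi_apply, Phi_apply]
  simp only [Matrix.mul_apply, ContinuousLinearMap.sum_apply, ContinuousLinearMap.mul_apply]
  rw [Finset.sum_comm]
  refine Finset.sum_congr rfl fun k _ => ?_
  rw [Phi_apply, map_sum]

lemma Phi_star (M : Matrix (Fin n) (Fin n) A) : Phi (star M) = star (Phi M) := by
  rw [ContinuousLinearMap.star_eq_adjoint]
  rw [ContinuousLinearMap.eq_adjoint_iff]
  intro x y
  rw [PiLp.inner_apply, PiLp.inner_apply]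
  simp only [Phi_apply, inner_sum, sum_inner]
  rw [Finset.sum_comm]
  refine Finset.sum_congr rfl fun j _ => Finset.sum_congr rfl fun i _ => ?_
  rw [Matrix.star_apply, ContinuousLinearMap.star_eq_adjoint]
  exact ContinuousLinearMap.adjoint_inner_left (M j i) (y i) (x j)

lemma Phi_zero : Phi (0 : Matrix (Fin n) (Fin n) A) = 0 := by
  apply ContinuousLinearMap.ext
  intro v
  refine PiLp.ext fun i => ?_
  rw [Phi_apply]
  simp


/-- matrix of an operator on `K n H` -/
def Psi (T : K n H →L[ℂ] K n H) : Matrix (Fin n) (Fin n) A :=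
  Matrix.of fun i j => (proj' i).comp (T.comp (incl j))

lemma Phi_Psi (T : K n H →L[ℂ] K n H) : Phi (Psi T) = T := by
  apply ContinuousLinearMap.ext
  intro v
  have hv : (∑ j, incl j (v j)) = v := by
    refine PiLp.ext fun k => ?_
    have h1 : (∑ j, incl j (v j)) k = ∑ j, incl j (v j) k :=
      by rw [WithLp.ofLp_sum, Finset.sum_apply]
    rw [h1]
    simp [incl_apply]
  refine PiLp.ext fun i => ?_
  rw [Phi_apply]
  have h2 : ∀ j, Psi T i j (v j) = ((proj' i).comp T) (incl j (v j)) := fun j => rfl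
  calc ∑ j, Psi T i j (v j) = ∑ j, ((proj' i).comp T) (incl j (v j)) := by simp [h2]
    _ = ((proj' i).comp T) (∑ j, incl j (v j)) := (map_sum _ _ _).symm
    _ = T v i := by rw [hv]; rfl

lemma kernelProjection_absorb {X p : Matrix (Fin n) (Fin n) A}
    (hp : IsKernelProjection X p) {a : Matrix (Fin n) (Fin n) A}
    (ha : X * a = 0) : p * a = a := by
  classical
  set S : Submodule ℂ (K n H) := LinearMap.ker (Phi X : K n H →ₗ[ℂ] K n H) with hS
  haveI : CompleteSpace S := (ContinuousLinearMap.isClosed_ker (Phi X)).completeSpace_coe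
  set Pop : K n H →L[ℂ] K n H := S.subtypeL ∘L S.orthogonalProjection with hPop
  have hmem : ∀ v, Pop v ∈ S := fun v => (S.orthogonalProjection v).2
  have hfix : ∀ v ∈ S, Pop v = v := fun v hv => Submodule.starProjection_eq_self_iff.mpr hv
  set P' : Matrix (Fin n) (Fin n) A := Psi Pop with hP'
  have hPhiP' : Phi P' = Pop := Phi_Psi Pop
  have h1 : X * P' = 0 := by
    apply Phi_inj
    rw [Phi_mul, hPhiP', Phi_zero]
    apply ContinuousLinearMap.ext
    intro v
    have : Phi X (Pop v) = 0 := LinearMap.mem_ker.mp (hmem v)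
    simpa using this
  have hidem : IsIdempotentElem P' := by
    apply Phi_inj
    rw [Phi_mul, hPhiP']
    apply ContinuousLinearMap.ext
    intro v
    exact hfix (Pop v) (hmem v)
  have hsa : IsSelfAdjoint P' := by
    apply Phi_inj
    rw [Phi_star, hPhiP']
    exact isSelfAdjoint_starProjection S
  have hpP : p * P' = P' := hp.2.2.2 P' hidem hsa h1
  have haP : P' * a = a := by
    apply Phi_inj
    rw [Phi_mul, hPhiP']
    apply ContinuousLinearMap.ext
    intro v
    refine hfix (Phi a v) ?_
    rw [hS]
    refine LinearMap.mem_ker.mpr ?_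
    have : Phi (X * a) v = Phi X (Phi a v) := by rw [Phi_mul]; rfl
    rw [ContinuousLinearMap.coe_coe, ← this, ha, Phi_zero]
    rfl
  calc p * a = p * (P' * a) := by rw [haP]
    _ = (p * P') * a := (mul_assoc _ _ _).symm
    _ = P' * a := by rw [hpP]
    _ = a := haP

lemma mul_algebraMap (x : A) (c : ℂ) : x * algebraMap ℂ (H →L[ℂ] H) c = c • x := by
  rw [← Algebra.commutes, ← Algebra.smul_def]

lemma algebraMap_mul (c : ℂ) (x : A) : algebraMap ℂ (H →L[ℂ] H) c * x = c • x :=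
  (Algebra.smul_def c x).symm

lemma tau_entry_conj (τ : A →ₗ[ℂ] ℂ) (M₁ M₂ : Matrix (Fin n) (Fin n) ℂ)
    (B : Matrix (Fin n) (Fin n) A) (i j : Fin n) :
    τ ((M₁.map (algebraMap ℂ (H →L[ℂ] H)) * B * M₂.map (algebraMap ℂ (H →L[ℂ] H))) i j)
      = (M₁ * (Matrix.of fun k l => τ (B k l)) * M₂) i j := by
  simp only [Matrix.mul_apply, Matrix.map_apply, mul_algebraMap, algebraMap_mul,
    Finset.sum_smul, smul_smul, map_sum, map_smul, smul_eq_mul, Matrix.of_apply,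
    Finset.sum_mul, Finset.mul_sum]
  refine Finset.sum_congr rfl fun l _ => Finset.sum_congr rfl fun k _ => ?_
  ring

lemma all_zero_of_sum_tau_eq_zero (τ : (H →L[ℂ] H) →ₗ[ℂ] ℂ)
    (hτpos : ∀ a : H →L[ℂ] H, a.IsPositive → 0 ≤ (τ a).re ∧ (τ a).im = 0)
    (hτfaithful : ∀ a : H →L[ℂ] H, a.IsPositive → τ a = 0 → a = 0)
    (f : Fin n → (H →L[ℂ] H)) (h : ∑ k, τ (star (f k) * f k) = 0) : ∀ k, f k = 0 := by
  have hre : ∀ k, 0 ≤ (τ (star (f k) * f k)).re :=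
    fun k => (hτpos _ (isPositive_star_mul_self _)).1
  have him : ∀ k, (τ (star (f k) * f k)).im = 0 :=
    fun k => (hτpos _ (isPositive_star_mul_self _)).2
  have hsumre : ∑ k, (τ (star (f k) * f k)).re = 0 := by
    have h2 := congrArg Complex.re h
    simpa [Complex.re_sum] using h2
  intro k
  have hre0 : (τ (star (f k) * f k)).re = 0 :=
    (Finset.sum_eq_zero_iff_of_nonneg (fun k _ => hre k)).mp hsumre k (Finset.mem_univ k)
  have hτ0 : τ (star (f k) * f k) = 0 := Complex.ext hre0 (him k)
  exact star_mul_self_eq_zero (hτfaithful _ (isPositive_star_mul_self _) hτ0)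

lemma trace_idem_rank (M : Matrix (Fin n) (Fin n) ℂ) (h : M * M = M) :
    Matrix.trace M = (M.rank : ℂ) := by
  have hproj : LinearMap.IsProj (LinearMap.range M.mulVecLin) M.mulVecLin := by
    refine ⟨fun x => LinearMap.mem_range_self _ x, ?_⟩
    rintro x ⟨y, rfl⟩
    show M.mulVecLin (M.mulVecLin y) = M.mulVecLin y
    simp [Matrix.mulVecLin_apply, Matrix.mulVec_mulVec, h]
  have ht := hproj.trace
  rw [LinearMap.trace_eq_matrix_trace ℂ (Pi.basisFun ℂ (Fin n)),
    LinearMap.toMatrix_eq_toMatrix'] at ht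
  rw [show M.mulVecLin = Matrix.toLin' M from (Matrix.toLin'_apply' M).symm,
    LinearMap.toMatrix'_toLin'] at ht
  exact ht

end S17

/-- Let `X ∈ Mₙ(A)` be selfadjoint, `E : Mₙ(A) → Mₙ(ℂ)⊗1` the trace-preserving conditional
expectation `E([a_{ij}]) = [τ(a_{ij})]`, `p = ker X`, and `q₁ = 1 - ker(E(p))` the support
projection of `E(p)`.  Then `ker(X·q₁) = p + (1 - q₁)`, `E(ker(X·q₁)) = E(p) + (1 - q₁)`
is invertible, and `n·τₙ(ker(X·q₁)) - n·τₙ(p)` is the rank of `1 - q₁`, an integer. -/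
theorem stmt_17 {H : Type*} [NormedAddCommGroup H] [InnerProductSpace ℂ H] [CompleteSpace H]
    (n : ℕ) (hn : 0 < n)
    (τ : (H →L[ℂ] H) →ₗ[ℂ] ℂ)
    (hτ1 : τ 1 = 1)
    (hτpos : ∀ a : H →L[ℂ] H, a.IsPositive → 0 ≤ (τ a).re ∧ (τ a).im = 0)
    (hτfaithful : ∀ a : H →L[ℂ] H, a.IsPositive → τ a = 0 → a = 0)
    (hτtrace : ∀ a b : H →L[ℂ] H, τ (a * b) = τ (b * a))
    (X : Matrix (Fin n) (Fin n) (H →L[ℂ] H)) (hX : IsSelfAdjoint X)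
    (E : Matrix (Fin n) (Fin n) (H →L[ℂ] H) → Matrix (Fin n) (Fin n) (H →L[ℂ] H))
    (hE : ∀ a : Matrix (Fin n) (Fin n) (H →L[ℂ] H), ∀ i j : Fin n,
      E a i j = τ (a i j) • (1 : H →L[ℂ] H))
    (p : Matrix (Fin n) (Fin n) (H →L[ℂ] H)) (hp : IsKernelProjection X p)
    (q₁c : Matrix (Fin n) (Fin n) ℂ)
    (hq₁proj : q₁c * q₁c = q₁c ∧ q₁c.IsHermitian)
    (hq₁supp : LinearMap.ker (Matrix.toLin' q₁c) =
      LinearMap.ker (Matrix.toLin' (Matrix.of fun i j => τ (p i j))))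
    (q₁ : Matrix (Fin n) (Fin n) (H →L[ℂ] H))
    (hq₁ : q₁ = q₁c.map (fun z => z • (1 : H →L[ℂ] H)))
    (r : Matrix (Fin n) (Fin n) (H →L[ℂ] H)) (hr : IsKernelProjection (X * q₁) r) :
    r = p + (1 - q₁) ∧
    E r = E p + (1 - q₁) ∧ IsUnit (E p + (1 - q₁)) ∧
    (∑ i : Fin n, (τ (r i i)).re) - (∑ i : Fin n, (τ (p i i)).re)
      = ((1 - q₁c).rank : ℝ) := by
  classical
  obtain ⟨hq₁idem, hq₁herm⟩ := hq₁proj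
  obtain ⟨hpidem, hpsa, hXp, hpmax⟩ := hp
  obtain ⟨hridem, hrsa, hXqr, hrmax⟩ := hr
  set ρ : ℂ →+* (H →L[ℂ] H) := algebraMap ℂ (H →L[ℂ] H) with hρ
  set ec : Matrix (Fin n) (Fin n) ℂ := 1 - q₁c with hec
  set e : Matrix (Fin n) (Fin n) (H →L[ℂ] H) := 1 - q₁ with he
  have hmapM : ∀ M : Matrix (Fin n) (Fin n) ℂ, M.map ρ = ρ.mapMatrix M := fun _ => rfl
  have hq₁map : q₁ = q₁c.map ρ := by
    rw [hq₁]
    ext i j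
    rw [Matrix.map_apply, Matrix.map_apply, hρ, Algebra.algebraMap_eq_smul_one]
  have hemap : e = ec.map ρ := by
    rw [hmapM, hec, map_sub, map_one, he, hq₁map, hmapM]
  -- basic algebra of e and q₁
  have hecidem : ec * ec = ec := by
    rw [hec]; simp [sub_mul, mul_sub, hq₁idem]
  have hee : e * e = e := by
    rw [hemap, hmapM, ← map_mul, hecidem]
  have hq₁cec : q₁c * ec = 0 := by
    rw [hec]; simp [mul_sub, hq₁idem]
  have hecq₁c : ec * q₁c = 0 := by
    rw [hec]; simp [sub_mul, hq₁idem]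
  have hq₁e : q₁ * e = 0 := by
    rw [hemap, hq₁map, hmapM, hmapM, ← map_mul, hq₁cec, map_zero]
  have hech : Matrix.conjTranspose ec = ec := by
    rw [hec, Matrix.conjTranspose_sub, Matrix.conjTranspose_one, hq₁herm]
  have hstarmap : ∀ M : Matrix (Fin n) (Fin n) ℂ, star (M.map ρ) = M.conjTranspose.map ρ := by
    intro M
    ext i j
    rw [Matrix.star_apply, Matrix.map_apply, Matrix.map_apply, Matrix.conjTranspose_apply, hρ]
    rw [Algebra.algebraMap_eq_smul_one, Algebra.algebraMap_eq_smul_one, star_smul, star_one]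
  have hse : star e = e := by rw [hemap, hstarmap, hech]
  -- the matrix E(p) over ℂ
  set Epc : Matrix (Fin n) (Fin n) ℂ := Matrix.of fun i j => τ (p i j) with hEpc
  have hEpcec : Epc * ec = 0 := by
    have h0 : ∀ x : Fin n → ℂ, (Epc * ec).mulVec x = 0 := by
      intro x
      have hm : ec.mulVec x ∈ LinearMap.ker (Matrix.toLin' q₁c) := by
        refine LinearMap.mem_ker.mpr ?_
        rw [Matrix.toLin'_apply, Matrix.mulVec_mulVec, hq₁cec, Matrix.zero_mulVec]
      rw [hq₁supp] at hm
      have := LinearMap.mem_ker.mp hm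
      rw [Matrix.toLin'_apply] at this
      rw [← Matrix.mulVec_mulVec]
      exact this
    ext i j
    have h5 := congrFun (h0 (Pi.single j 1)) i
    rw [Matrix.mulVec_single] at h5
    simpa using h5
  -- p * e = 0 and e * p = 0
  have hτconj : ∀ j, τ ((e * p * e) j j) = 0 := by
    intro j
    have h1 : τ ((e * p * e) j j) = (ec * (Matrix.of fun k l => τ (p k l)) * ec) j j := by
      rw [hemap]
      exact S17.tau_entry_conj τ ec ec p j j
    rw [h1, ← hEpc, mul_assoc, hEpcec, mul_zero, Matrix.zero_apply]
  have hpe : p * e = 0 := by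
    have hstar : star (p * e) * (p * e) = e * p * e := by
      rw [star_mul, hse, hpsa]
      have h2 : (e * p) * (p * e) = e * ((p * p) * e) := by noncomm_ring
      rw [h2, hpidem, ← mul_assoc]
    have hsum : ∀ j, ∑ k, τ (star ((p * e) k j) * (p * e) k j) = 0 := by
      intro j
      have h3 : (star (p * e) * (p * e)) j j = ∑ k, star ((p * e) k j) * (p * e) k j := by
        rw [Matrix.mul_apply]
        exact Finset.sum_congr rfl fun k _ => by rw [Matrix.star_apply]
      have h4 := hτconj j
      rw [← hstar, h3, map_sum] at h4
      exact h4
    ext k j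
    have := S17.all_zero_of_sum_tau_eq_zero τ hτpos hτfaithful (fun k => (p * e) k j) (hsum j) k
    rw [this, Matrix.zero_apply]
  have hep : e * p = 0 := by
    have : star (p * e) = e * p := by rw [star_mul, hse, hpsa]
    rw [← this, hpe, star_zero]
  -- the candidate kernel projection s = p + e
  set s : Matrix (Fin n) (Fin n) (H →L[ℂ] H) := p + e with hs
  have hq₁eq : q₁ = 1 - e := by rw [he, sub_sub_cancel]
  have hq₁s : q₁ * s = p := by
    rw [hq₁eq, hs, sub_mul, one_mul, mul_add, hep, hee]
    abel
  have hXqs : (X * q₁) * s = 0 := by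
    rw [mul_assoc, hq₁s, hXp]
  have hsidem : IsIdempotentElem s := by
    show s * s = s
    rw [hs, add_mul, mul_add, mul_add, hpidem, hpe, hep, hee]
    abel
  have hssa : IsSelfAdjoint s := by
    show star s = s
    rw [hs, star_add, hpsa, hse]
  -- r ≤ s and s ≤ r
  have hrs : r * s = s := hrmax s hsidem hssa hXqs
  have hsr : s * r = r := by
    have hXa : X * (q₁ * r) = 0 := by rw [← mul_assoc, hXqr]
    have hpa : p * (q₁ * r) = q₁ * r :=
      S17.kernelProjection_absorb ⟨hpidem, hpsa, hXp, hpmax⟩ hXa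
    have h1q : q₁ + e = 1 := by rw [he]; abel
    have hpr : p * r = q₁ * r := by
      calc p * r = p * ((q₁ + e) * r) := by rw [h1q, one_mul]
        _ = p * (q₁ * r) + (p * e) * r := by noncomm_ring
        _ = q₁ * r + 0 := by rw [hpa, hpe, zero_mul]
        _ = q₁ * r := add_zero _
    calc s * r = p * r + e * r := by rw [hs, add_mul]
      _ = q₁ * r + e * r := by rw [hpr]
      _ = (q₁ + e) * r := by rw [add_mul]
      _ = r := by rw [h1q, one_mul]
  have hreq : r = s := by
    calc r = star r := hrsa.symm
      _ = star (s * r) := by rw [hsr]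
      _ = star r * star s := by rw [star_mul]
      _ = r * s := by rw [hrsa, hssa]
      _ = s := hrs
  -- value of τ on entries of e
  have hτe : ∀ i j, τ (e i j) = ec i j := by
    intro i j
    rw [hemap, Matrix.map_apply, hρ, Algebra.algebraMap_eq_smul_one, map_smul, hτ1,
      smul_eq_mul, mul_one]
  have hEr : E r = E p + e := by
    ext i j
    rw [hE, Matrix.add_apply, hE, hreq, hs, Matrix.add_apply, map_add, add_smul]
    congr 1
    rw [hτe i j, hemap, Matrix.map_apply, hρ, Algebra.algebraMap_eq_smul_one]
  -- invertibility
  have hEp : E p = Epc.map ρ := by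
    ext i j
    rw [hE, Matrix.map_apply, hEpc, Matrix.of_apply, hρ, Algebra.algebraMap_eq_smul_one]
  have hker : LinearMap.ker (Matrix.toLin' (Epc + ec)) = ⊥ := by
    rw [LinearMap.ker_eq_bot']
    intro z hz
    rw [Matrix.toLin'_apply] at hz
    set w : Fin n → ℂ := ec.mulVec z with hw
    set wop : Fin n → (H →L[ℂ] H) := fun k => ∑ j, z j • p k j with hwop
    have hkey : (∑ k, τ (star (wop k) * wop k)) + ∑ i, (starRingEnd ℂ) (w i) * w i = 0 := by
      have h0 : ∑ i, (starRingEnd ℂ) (z i) * ((Epc + ec).mulVec z) i = 0 := by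
        rw [hz]; simp
      simp only [Matrix.add_mulVec, Pi.add_apply, mul_add, Finset.sum_add_distrib] at h0
      have hstep1 : ∀ i, (Epc.mulVec z) i = ∑ j, τ (p i j) * z j := by
        intro i
        simp [Matrix.mulVec, dotProduct, hEpc]
      have hpik : ∀ i k, p i k = star (p k i) := by
        intro i k
        conv_lhs => rw [← hpsa]
        rw [Matrix.star_apply]
      have hppij : ∀ i j, ∑ k, star (p k i) * p k j = p i j := by
        intro i j
        calc ∑ k, star (p k i) * p k j = ∑ k, p i k * p k j := by
              refine Finset.sum_congr rfl fun k _ => ?_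
              rw [← hpik]
          _ = (p * p) i j := (Matrix.mul_apply).symm
          _ = p i j := by rw [hpidem]
      have hc1 : ∑ k, τ (star (wop k) * wop k)
          = ∑ i, (starRingEnd ℂ) (z i) * (Epc.mulVec z) i := by
        have hwops : ∀ k, star (wop k) * wop k
            = ∑ i, ∑ j, ((starRingEnd ℂ) (z i) * z j) • (star (p k i) * p k j) := by
          intro k
          rw [hwop]
          simp only [star_sum, star_smul]
          rw [Finset.sum_mul_sum]
          refine Finset.sum_congr rfl fun i _ => Finset.sum_congr rfl fun j _ => ?_
          rw [smul_mul_smul_comm]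
          rfl
        calc ∑ k, τ (star (wop k) * wop k)
            = ∑ k, ∑ i, ∑ j, ((starRingEnd ℂ) (z i) * z j) * τ (star (p k i) * p k j) := by
              simp only [hwops, map_sum, map_smul, smul_eq_mul]
          _ = ∑ i, ∑ k, ∑ j, ((starRingEnd ℂ) (z i) * z j) * τ (star (p k i) * p k j) :=
              Finset.sum_comm
          _ = ∑ i, ∑ j, ((starRingEnd ℂ) (z i) * z j) * τ (∑ k, star (p k i) * p k j) := by
              refine Finset.sum_congr rfl fun i _ => ?_
              rw [Finset.sum_comm]
              refine Finset.sum_congr rfl fun j _ => ?_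
              rw [map_sum, Finset.mul_sum]
          _ = ∑ i, ∑ j, ((starRingEnd ℂ) (z i) * z j) * τ (p i j) := by
              simp only [hppij]
          _ = ∑ i, (starRingEnd ℂ) (z i) * (Epc.mulVec z) i := by
              refine Finset.sum_congr rfl fun i _ => ?_
              rw [hstep1, Finset.mul_sum]
              refine Finset.sum_congr rfl fun j _ => ?_
              ring
      have hc2 : ∑ i, (starRingEnd ℂ) (z i) * (ec.mulVec z) i
          = ∑ i, (starRingEnd ℂ) (w i) * w i := by
        have hstep : ec.mulVec z = ec.mulVec w := by
          conv_rhs => rw [hw, Matrix.mulVec_mulVec, hecidem]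
        rw [hstep]
        have hmv : ∀ i, (ec.mulVec w) i = ∑ j, ec i j * w j := by
          intro i
          simp [Matrix.mulVec, dotProduct]
        have hconjw : ∀ j, ∑ i, (starRingEnd ℂ) (z i) * ec i j = (starRingEnd ℂ) (w j) := by
          intro j
          have hwj : w j = ∑ i, ec j i * z i := by
            rw [hw]
            simp [Matrix.mulVec, dotProduct]
          rw [hwj, map_sum]
          refine Finset.sum_congr rfl fun i _ => ?_
          rw [map_mul]
          have : (starRingEnd ℂ) (ec j i) = ec i j := by
            have h8 := congrFun (congrFun hech i) j
            rw [Matrix.conjTranspose_apply] at h8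
            exact h8
          rw [this]
          ring
        calc ∑ i, (starRingEnd ℂ) (z i) * (ec.mulVec w) i
            = ∑ i, ∑ j, ((starRingEnd ℂ) (z i) * ec i j) * w j := by
              refine Finset.sum_congr rfl fun i _ => ?_
              rw [hmv, Finset.mul_sum]
              refine Finset.sum_congr rfl fun j _ => ?_
              ring
          _ = ∑ j, (∑ i, (starRingEnd ℂ) (z i) * ec i j) * w j := by
              rw [Finset.sum_comm]
              refine Finset.sum_congr rfl fun j _ => ?_
              rw [Finset.sum_mul]
          _ = ∑ j, (starRingEnd ℂ) (w j) * w j := by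
              simp only [hconjw]
      rw [← hc1, hc2] at h0
      exact h0
    -- extract positivity consequences
    have hstep1 : ∀ i, (Epc.mulVec z) i = ∑ j, τ (p i j) * z j := by
      intro i
      simp [Matrix.mulVec, dotProduct, hEpc]
    have him : ∀ k, (τ (star (wop k) * wop k)).im = 0 :=
      fun k => (hτpos _ (S17.isPositive_star_mul_self _)).2
    have hre : ∀ k, 0 ≤ (τ (star (wop k) * wop k)).re :=
      fun k => (hτpos _ (S17.isPositive_star_mul_self _)).1
    have hwsq : ∀ i, (starRingEnd ℂ) (w i) * w i = ((Complex.normSq (w i) : ℝ) : ℂ) :=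
      fun i => Complex.normSq_eq_conj_mul_self.symm
    have hre0 : (∑ k, (τ (star (wop k) * wop k)).re) + ∑ i, Complex.normSq (w i) = 0 := by
      have h9 := congrArg Complex.re hkey
      simpa [Complex.add_re, Complex.re_sum, hwsq] using h9
    have hA : 0 ≤ ∑ k, (τ (star (wop k) * wop k)).re :=
      Finset.sum_nonneg fun k _ => hre k
    have hB : 0 ≤ ∑ i, Complex.normSq (w i) :=
      Finset.sum_nonneg fun i _ => Complex.normSq_nonneg _
    have hA0 : ∑ k, (τ (star (wop k) * wop k)).re = 0 := by linarith
    have hB0 : ∑ i, Complex.normSq (w i) = 0 := by linarith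
    have hwz : ∀ i, w i = 0 := fun i => Complex.normSq_eq_zero.mp
      ((Finset.sum_eq_zero_iff_of_nonneg (fun i _ => Complex.normSq_nonneg _)).mp hB0 i
        (Finset.mem_univ i))
    have hsumτ : ∑ k, τ (star (wop k) * wop k) = 0 := by
      apply Complex.ext
      · rw [Complex.re_sum]
        simpa using hA0
      · rw [Complex.im_sum]
        simp [him]
    have hwop0 : ∀ k, wop k = 0 :=
      S17.all_zero_of_sum_tau_eq_zero τ hτpos hτfaithful wop hsumτ
    have hEz : Epc.mulVec z = 0 := by
      funext i
      have h10 : (Epc.mulVec z) i = τ (wop i) := by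
        rw [hstep1 i, hwop, map_sum]
        refine Finset.sum_congr rfl fun j _ => ?_
        rw [map_smul, smul_eq_mul]
        ring
      rw [h10, hwop0, map_zero]
      rfl
    have hzker : z ∈ LinearMap.ker (Matrix.toLin' q₁c) := by
      rw [hq₁supp]
      refine LinearMap.mem_ker.mpr ?_
      rw [Matrix.toLin'_apply]
      exact hEz
    have hq₁z : q₁c.mulVec z = 0 := by
      have h11 := LinearMap.mem_ker.mp hzker
      rwa [Matrix.toLin'_apply] at h11
    calc z = z - q₁c.mulVec z := by rw [hq₁z, sub_zero]
      _ = (1 - q₁c).mulVec z := by rw [Matrix.sub_mulVec, Matrix.one_mulVec]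
      _ = 0 := by rw [← hec, ← hw]; exact funext hwz
  -- invertibility of E p + e
  have hUEnd : IsUnit (Matrix.toLin' (Epc + ec)) :=
    (LinearMap.isUnit_iff_ker_eq_bot _).mpr hker
  have hUc : IsUnit (Epc + ec) := by
    have h1 : Matrix.toLinAlgEquiv' (Epc + ec) = Matrix.toLin' (Epc + ec) := rfl
    have h2 := hUEnd.map
      (Matrix.toLinAlgEquiv'.symm : ((Fin n → ℂ) →ₗ[ℂ] (Fin n → ℂ)) ≃ₐ[ℂ] Matrix (Fin n) (Fin n) ℂ)
    rwa [← h1, AlgEquiv.symm_apply_apply] at h2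
  have hEpe : E p + e = (Epc + ec).map ρ := by
    rw [hmapM, map_add, hEp, hemap, hmapM, hmapM]
  have hUnit : IsUnit (E p + e) := by
    rw [hEpe, hmapM]
    exact hUc.map ρ.mapMatrix
  -- the trace computation
  have hτr : ∀ i, τ (r i i) = τ (p i i) + ec i i := by
    intro i
    rw [hreq, hs, Matrix.add_apply, map_add, hτe]
  have htrace : Matrix.trace ec = (ec.rank : ℂ) := S17.trace_idem_rank ec hecidem
  have h7 : ∑ i, (ec i i).re = (ec.rank : ℝ) := by
    calc ∑ i, (ec i i).re = (Matrix.trace ec).re := by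
          rw [Matrix.trace, Complex.re_sum]
          rfl
      _ = ((ec.rank : ℂ)).re := by rw [htrace]
      _ = (ec.rank : ℝ) := Complex.natCast_re _
  refine ⟨hreq.trans hs, hEr, hUnit, ?_⟩
  have h12 : ∑ i, (τ (r i i)).re = (∑ i, (τ (p i i)).re) + ∑ i, (ec i i).re := by
    rw [← Finset.sum_add_distrib]
    refine Finset.sum_congr rfl fun i _ => ?_
    rw [hτr, Complex.add_re]
  rw [h12, h7]
  ring
end
end
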